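/- Let A_1, ..., A_m be non-negative matrices that define bounded operators on ℓ². Then w(A_1 ∘ A_2 ∘ ⋯ ∘ A_m) ≤ (w(A_1^{(m)}) · w(A_2^{(m)}) ⋯ w(A_m^{(m)}))^{1/m}. -/

import Mathlib

open scoped ENNReal NNReal BigOperators InnerProductSpace

noncomputable section

/-- The sequence space `ℓ^p(ℕ)` (real scalars). -/
abbrev lpSeq (p : ℝ≥0∞) := lp (fun _ : ℕ => ℝ) p

/-- The (infinite) non-negative matrix `a` defines the bounded operator `T` on `ℓ^p`:
for every `x ∈ ℓ^p` and every row index `i`, the series `∑_j a i j * x j` converges,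
with sum equal to `(T x) i`. -/
def Represents (p : ℝ≥0∞) [Fact (1 ≤ p)] (a : ℕ → ℕ → ℝ)
    (T : lpSeq p →L[ℝ] lpSeq p) : Prop :=
  ∀ x : lpSeq p, ∀ i : ℕ, HasSum (fun j => a i j * x j) (T x i)

/-- Hadamard (entrywise) product of two matrices. -/
def hadamard (a b : ℕ → ℕ → ℝ) : ℕ → ℕ → ℝ := fun i j => a i j * b i j

/-- Hadamard (entrywise) power `a^{(t)}`. -/
def hadPow (a : ℕ → ℕ → ℝ) (t : ℝ) : ℕ → ℕ → ℝ := fun i j => a i j ^ t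

/-- Hadamard product of a finite family of matrices. -/
def hadProd {m : ℕ} (A : Fin m → ℕ → ℕ → ℝ) : ℕ → ℕ → ℝ := fun i j => ∏ k, A k i j

/-- Matrix product of two infinite matrices. -/
def matMul (a b : ℕ → ℕ → ℝ) : ℕ → ℕ → ℝ := fun i j => ∑' k, a i k * b k j

/-- The identity matrix. -/
def idMat : ℕ → ℕ → ℝ := fun i j => if i = j then 1 else 0

/-- Product of a list of matrices. -/
def matListProd : List (ℕ → ℕ → ℝ) → ℕ → ℕ → ℝ
  | [] => idMat
  | a :: l => matMul a (matListProd l)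

/-- Transposed matrix. -/
def transp (a : ℕ → ℕ → ℝ) : ℕ → ℕ → ℝ := fun i j => a j i

/-- The cyclic matrix product `A_i A_{i+1} ⋯ A_m A_1 ⋯ A_{i-1}` starting at index `i`. -/
def cycMatProd {m : ℕ} (A : Fin m → ℕ → ℕ → ℝ) (i : Fin m) : ℕ → ℕ → ℝ :=
  matListProd (List.ofFn fun k : Fin m => A (i + k))

/-- The cyclic operator product `T_i T_{i+1} ⋯ T_m T_1 ⋯ T_{i-1}` starting at index `i`
(operator multiplication is composition). -/
def cycOpProd {m : ℕ} {p : ℝ≥0∞} [Fact (1 ≤ p)]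
    (T : Fin m → lpSeq p →L[ℝ] lpSeq p) (i : Fin m) : lpSeq p →L[ℝ] lpSeq p :=
  (List.ofFn fun k : Fin m => T (i + k)).prod

/-- The numerical radius of a bounded operator on `ℓ²`:
`w(T) = sup { |⟨T f, f⟩| : ‖f‖ = 1 }`. -/
def numRadius (T : lpSeq 2 →L[ℝ] lpSeq 2) : ℝ :=
  sSup { r : ℝ | ∃ f : lpSeq 2, ‖f‖ = 1 ∧ r = |⟪T f, f⟫_ℝ| }

/-! Since all matrices are non-negative, replacing `f` by `|f|` can only increase
`|⟪H f, f⟫|`. For `f ≥ 0` the form `⟪H f, f⟫ = ∑ i j, (∏ k, A k i j) f i f j` is a sum over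
`ℕ × ℕ` of products of the `m`-th roots of `A k i j ^ m * f i * f j`, so Hölder's inequality for
`m` functions with exponents `1/m` bounds it by `∏ k, ⟪S k f, f⟫ ^ (1/m)`. The operators `H` and
`S k` exist because every entry of `A k` is at most `‖T k‖`, so `A₁ ∘ ⋯ ∘ A_m` and `A_k^{(m)}`
are entrywise dominated by multiples of a single `A k`. -/

lemma lpSeq.real_inner_eq_tsum (f g : lpSeq 2) : ⟪f, g⟫_ℝ = ∑' i, f i * g i := by
  rw [lp.inner_eq_tsum]
  exact tsum_congr fun _ => Real.inner_apply _ _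

lemma lpSeq.summable_mul (f g : lpSeq 2) : Summable fun i => f i * g i :=
  (lp.summable_inner f g).congr fun _ => Real.inner_apply _ _

def absLp (f : lpSeq 2) : lpSeq 2 :=
  ⟨fun i => |f i|, (lp.memℓp f).mono' fun i => by simp⟩

@[simp] lemma absLp_apply (f : lpSeq 2) (i : ℕ) : absLp f i = |f i| := rfl

lemma absLp_nonneg (f : lpSeq 2) (i : ℕ) : 0 ≤ absLp f i := abs_nonneg (f i)

@[simp] lemma norm_absLp (f : lpSeq 2) : ‖absLp f‖ = ‖f‖ :=
  le_antisymm (lp.norm_mono two_ne_zero fun i => by simp)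
    (lp.norm_mono two_ne_zero fun i => by simp)

lemma abs_inner_le_numRadius (T : lpSeq 2 →L[ℝ] lpSeq 2) {f : lpSeq 2} (hf : ‖f‖ = 1) :
    |⟪T f, f⟫_ℝ| ≤ numRadius T := by
  refine le_csSup ⟨‖T‖, ?_⟩ ⟨f, hf, rfl⟩
  rintro _ ⟨g, hg, rfl⟩
  simpa [hg] using abs_real_inner_le_norm (T g) g |>.trans
    (mul_le_mul_of_nonneg_right (T.le_opNorm g) (norm_nonneg g))

lemma numRadius_nonneg (T : lpSeq 2 →L[ℝ] lpSeq 2) : 0 ≤ numRadius T :=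
  (abs_nonneg _).trans (abs_inner_le_numRadius T (f := lp.single 2 0 1) (by simp [lp.norm_single]))

lemma hadPow_nonneg {a : ℕ → ℕ → ℝ} (ha : ∀ i j, 0 ≤ a i j) (t : ℝ) (i j : ℕ) :
    0 ≤ hadPow a t i j :=
  Real.rpow_nonneg (ha i j) t

lemma hadProd_nonneg {m : ℕ} {A : Fin m → ℕ → ℕ → ℝ} (hA : ∀ k i j, 0 ≤ A k i j) (i j : ℕ) :
    0 ≤ hadProd A i j :=
  Finset.prod_nonneg fun k _ => hA k i j

lemma ENNReal.tsum_prod_rpow_le {ι κ : Type*} (s : Finset ι) (f : ι → κ → ℝ≥0∞) {p : ι → ℝ}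
    (hp : ∑ i ∈ s, p i = 1) (h2p : ∀ i ∈ s, 0 ≤ p i) :
    ∑' x, ∏ i ∈ s, f i x ^ p i ≤ ∏ i ∈ s, (∑' x, f i x) ^ p i := by
  let _ : MeasurableSpace κ := ⊤
  simpa only [MeasureTheory.lintegral_count] using
    ENNReal.lintegral_prod_norm_pow_le (μ := MeasureTheory.Measure.count) s
      (fun i _ => (measurable_from_top (f := f i)).aemeasurable) hp h2p

lemma ENNReal.prod_pow_mul_rpow_inv {m : ℕ} (hm : m ≠ 0) (x : Fin m → ℝ≥0∞) (c : ℝ≥0∞) :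
    ∏ k, (x k ^ m * c) ^ (m⁻¹ : ℝ) = (∏ k, x k) * c := by
  simp_rw [ENNReal.mul_rpow_of_nonneg _ _ (inv_nonneg.2 m.cast_nonneg),
    ENNReal.pow_rpow_inv_natCast hm]
  rw [Finset.prod_mul_distrib, Finset.prod_const, Finset.card_univ, Fintype.card_fin,
    ENNReal.rpow_inv_natCast_pow hm]

namespace Represents

variable {a b : ℕ → ℕ → ℝ} {T : lpSeq 2 →L[ℝ] lpSeq 2}

lemma abs_le_opNorm (hT : Represents 2 a T) (i j : ℕ) : |a i j| ≤ ‖T‖ := by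
  set e : lpSeq 2 := lp.single 2 j 1 with he
  have hsingle : HasSum (fun l => a i l * e l) (a i j) := by
    convert hasSum_ite_eq j (a i j) using 2 with l
    split_ifs with h <;> simp [he, h]
  calc |a i j| = ‖T e i‖ := by rw [Real.norm_eq_abs, hsingle.unique (hT e i)]
    _ ≤ ‖T e‖ := lp.norm_apply_le_norm two_ne_zero _ i
    _ ≤ ‖T‖ * ‖e‖ := T.le_opNorm e
    _ = ‖T‖ := by simp [he, lp.norm_single]

lemma abs_apply_le (ha : ∀ i j, 0 ≤ a i j) (hT : Represents 2 a T) (x : lpSeq 2) (i : ℕ) :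
    |T x i| ≤ T (absLp x) i := by
  rw [← (hT x i).tsum_eq, ← (hT (absLp x) i).tsum_eq]
  refine (norm_tsum_le_tsum_norm (hT x i).summable.norm).trans (le_of_eq ?_)
  simp [abs_of_nonneg (ha _ _)]

lemma abs_inner_le (ha : ∀ i j, 0 ≤ a i j) (hT : Represents 2 a T) (f : lpSeq 2) :
    |⟪T f, f⟫_ℝ| ≤ ⟪T (absLp f), absLp f⟫_ℝ := by
  rw [lpSeq.real_inner_eq_tsum, lpSeq.real_inner_eq_tsum]
  refine (norm_tsum_le_tsum_norm (lpSeq.summable_mul _ _).norm).trans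
    ((lpSeq.summable_mul _ _).norm.tsum_le_tsum (fun i => ?_) (lpSeq.summable_mul _ _))
  rw [norm_mul, absLp_apply]
  exact mul_le_mul_of_nonneg_right (hT.abs_apply_le ha f i) (abs_nonneg _)

lemma apply_nonneg (ha : ∀ i j, 0 ≤ a i j) (hT : Represents 2 a T) {g : lpSeq 2}
    (hg : ∀ i, 0 ≤ g i) (i : ℕ) : 0 ≤ T g i :=
  (hT g i).nonneg fun j => mul_nonneg (ha i j) (hg j)

lemma inner_nonneg (ha : ∀ i j, 0 ≤ a i j) (hT : Represents 2 a T) {g : lpSeq 2}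
    (hg : ∀ i, 0 ≤ g i) : 0 ≤ ⟪T g, g⟫_ℝ := by
  rw [lpSeq.real_inner_eq_tsum]
  exact tsum_nonneg fun i => mul_nonneg (hT.apply_nonneg ha hg i) (hg i)

lemma ofReal_apply (ha : ∀ i j, 0 ≤ a i j) (hT : Represents 2 a T) {g : lpSeq 2}
    (hg : ∀ i, 0 ≤ g i) (i : ℕ) :
    ENNReal.ofReal (T g i) = ∑' j, ENNReal.ofReal (a i j) * ENNReal.ofReal (g j) := by
  rw [← (hT g i).tsum_eq,
    ENNReal.ofReal_tsum_of_nonneg (fun j => mul_nonneg (ha i j) (hg j)) (hT g i).summable]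
  simp only [ENNReal.ofReal_mul (ha i _)]

lemma ofReal_inner (ha : ∀ i j, 0 ≤ a i j) (hT : Represents 2 a T) {g : lpSeq 2}
    (hg : ∀ i, 0 ≤ g i) :
    ENNReal.ofReal ⟪T g, g⟫_ℝ = ∑' p : ℕ × ℕ,
      ENNReal.ofReal (a p.1 p.2) * (ENNReal.ofReal (g p.1) * ENNReal.ofReal (g p.2)) := by
  have hTg := hT.apply_nonneg ha hg
  rw [lpSeq.real_inner_eq_tsum, ENNReal.ofReal_tsum_of_nonneg
    (fun i => mul_nonneg (hTg i) (hg i)) (lpSeq.summable_mul _ _), ENNReal.tsum_prod']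
  refine tsum_congr fun i => ?_
  rw [ENNReal.ofReal_mul (hTg i), hT.ofReal_apply ha hg, ← ENNReal.tsum_mul_right]
  exact tsum_congr fun j => by ring

private lemma abs_mul_le {C : ℝ} (hba : ∀ i j, |b i j| ≤ C * a i j) (x : lpSeq 2) (i j : ℕ) :
    |b i j * x j| ≤ C * (a i j * |x j|) := by
  rw [abs_mul, ← mul_assoc]
  exact mul_le_mul_of_nonneg_right (hba i j) (abs_nonneg _)

lemma summable_mul_of_abs_le {C : ℝ} (hT : Represents 2 a T) (hba : ∀ i j, |b i j| ≤ C * a i j)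
    (x : lpSeq 2) (i : ℕ) : Summable fun j => b i j * x j :=
  .of_norm_bounded ((hT (absLp x) i).summable.mul_left C) (abs_mul_le hba x i)

lemma abs_tsum_mul_le {C : ℝ} (hT : Represents 2 a T) (hba : ∀ i j, |b i j| ≤ C * a i j)
    (x : lpSeq 2) (i : ℕ) : |∑' j, b i j * x j| ≤ C * T (absLp x) i := by
  have hb := hT.summable_mul_of_abs_le hba x i
  rw [← (hT (absLp x) i).tsum_eq, ← tsum_mul_left]
  exact (norm_tsum_le_tsum_norm hb.norm).trans
    (hb.norm.tsum_le_tsum (abs_mul_le hba x i) ((hT (absLp x) i).summable.mul_left C))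

lemma exists_of_abs_le {C : ℝ} (hT : Represents 2 a T) (hba : ∀ i j, |b i j| ≤ C * a i j) :
    ∃ S : lpSeq 2 →L[ℝ] lpSeq 2, Represents 2 b S := by
  have hdom : ∀ x : lpSeq 2, ∀ i, ‖∑' j, b i j * x j‖ ≤ ‖(C • T (absLp x)) i‖ := fun x i =>
    (hT.abs_tsum_mul_le hba x i).trans (le_abs_self _)
  let L : lpSeq 2 →ₗ[ℝ] lpSeq 2 :=
    { toFun := fun x => ⟨fun i => ∑' j, b i j * x j, (lp.memℓp _).mono' (hdom x)⟩
      map_add' := fun x y => by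
        ext i
        simp only [lp.coeFn_add, Pi.add_apply, mul_add]
        exact (hT.summable_mul_of_abs_le hba x i).tsum_add (hT.summable_mul_of_abs_le hba y i)
      map_smul' := fun c x => by
        ext i
        simp only [lp.coeFn_smul, Pi.smul_apply, smul_eq_mul, RingHom.id_apply, mul_left_comm]
        exact tsum_mul_left }
  refine ⟨L.mkContinuous (|C| * ‖T‖) fun x => ?_, fun x i =>
    (hT.summable_mul_of_abs_le hba x i).hasSum⟩
  calc ‖L x‖ ≤ ‖C • T (absLp x)‖ := lp.norm_mono two_ne_zero (hdom x)
    _ ≤ |C| * (‖T‖ * ‖x‖) := by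
      rw [norm_smul, Real.norm_eq_abs, ← norm_absLp x]
      exact mul_le_mul_of_nonneg_left (T.le_opNorm _) (abs_nonneg C)
    _ = |C| * ‖T‖ * ‖x‖ := (mul_assoc _ _ _).symm

lemma exists_hadamard_of_abs_le {c : ℕ → ℕ → ℝ} {M : ℝ} (ha : ∀ i j, 0 ≤ a i j)
    (hT : Represents 2 a T) (hc : ∀ i j, |c i j| ≤ M) :
    ∃ S : lpSeq 2 →L[ℝ] lpSeq 2, Represents 2 (hadamard a c) S :=
  hT.exists_of_abs_le fun i j => by
    rw [hadamard, abs_mul, abs_of_nonneg (ha i j), mul_comm M]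
    exact mul_le_mul_of_nonneg_left (hc i j) (ha i j)

lemma exists_hadPow {t : ℝ} (ha : ∀ i j, 0 ≤ a i j) (hT : Represents 2 a T) (ht : 1 ≤ t) :
    ∃ S : lpSeq 2 →L[ℝ] lpSeq 2, Represents 2 (hadPow a t) S := by
  have hsplit : hadPow a t = hadamard a fun i j => a i j ^ (t - 1) := by
    ext i j
    rw [hadPow, hadamard]
    nth_rw 1 [← add_sub_cancel 1 t]
    rw [Real.rpow_add' (ha i j) (by linarith), Real.rpow_one]
  rw [hsplit]
  refine hT.exists_hadamard_of_abs_le ha (M := ‖T‖ ^ (t - 1)) fun i j => ?_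
  rw [abs_of_nonneg (Real.rpow_nonneg (ha i j) _)]
  exact Real.rpow_le_rpow (ha i j) ((le_abs_self _).trans (hT.abs_le_opNorm i j))
    (by linarith)

end Represents

lemma exists_represents_hadProd {m : ℕ} (hm : 0 < m) {A : Fin m → ℕ → ℕ → ℝ}
    (hA : ∀ k i j, 0 ≤ A k i j) {T : Fin m → lpSeq 2 →L[ℝ] lpSeq 2}
    (hT : ∀ k, Represents 2 (A k) (T k)) :
    ∃ H : lpSeq 2 →L[ℝ] lpSeq 2, Represents 2 (hadProd A) H := by
  let k₀ : Fin m := ⟨0, hm⟩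
  have hsplit : hadProd A = hadamard (A k₀) fun i j => ∏ k ∈ Finset.univ.erase k₀, A k i j := by
    ext i j
    exact (Finset.mul_prod_erase _ (fun k => A k i j) (Finset.mem_univ k₀)).symm
  rw [hsplit]
  refine (hT k₀).exists_hadamard_of_abs_le (M := ∏ k ∈ Finset.univ.erase k₀, ‖T k‖) (hA k₀)
    fun i j => ?_
  rw [Finset.abs_prod]
  exact Finset.prod_le_prod (fun _ _ => abs_nonneg _) fun k _ => (hT k).abs_le_opNorm i j

lemma inner_hadProd_le {m : ℕ} (hm : m ≠ 0) {A : Fin m → ℕ → ℕ → ℝ}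
    (hA : ∀ k i j, 0 ≤ A k i j) {H : lpSeq 2 →L[ℝ] lpSeq 2} {S : Fin m → lpSeq 2 →L[ℝ] lpSeq 2}
    (hH : Represents 2 (hadProd A) H) (hS : ∀ k, Represents 2 (hadPow (A k) m) (S k))
    {g : lpSeq 2} (hg : ∀ i, 0 ≤ g i) :
    ⟪H g, g⟫_ℝ ≤ ∏ k, ⟪S k g, g⟫_ℝ ^ (m⁻¹ : ℝ) := by
  have hSg : ∀ k, 0 ≤ ⟪S k g, g⟫_ℝ := fun k => (hS k).inner_nonneg (hadPow_nonneg (hA k) _) hg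
  set G : ℕ × ℕ → ℝ≥0∞ := fun p => ENNReal.ofReal (g p.1) * ENNReal.ofReal (g p.2)
  have hSk : ∀ k, ENNReal.ofReal ⟪S k g, g⟫_ℝ = ∑' p, ENNReal.ofReal (A k p.1 p.2) ^ m * G p :=
    fun k => by
      simp only [(hS k).ofReal_inner (hadPow_nonneg (hA k) _) hg, hadPow, Real.rpow_natCast,
        ENNReal.ofReal_pow (hA k _ _), G]
  -- In `ℝ≥0∞` every double series converges, so Hölder applies without summability side goals.
  rw [← ENNReal.ofReal_le_ofReal_iff (Finset.prod_nonneg fun k _ => Real.rpow_nonneg (hSg k) _)]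
  calc ENNReal.ofReal ⟪H g, g⟫_ℝ = ∑' p, ENNReal.ofReal (hadProd A p.1 p.2) * G p :=
        hH.ofReal_inner (hadProd_nonneg hA) hg
    _ = ∑' p, ∏ k, (ENNReal.ofReal (A k p.1 p.2) ^ m * G p) ^ (m⁻¹ : ℝ) := by
        simp only [ENNReal.prod_pow_mul_rpow_inv hm, hadProd,
          ENNReal.ofReal_prod_of_nonneg fun k _ => hA k _ _]
    _ ≤ ∏ k, (∑' p, ENNReal.ofReal (A k p.1 p.2) ^ m * G p) ^ (m⁻¹ : ℝ) :=
        ENNReal.tsum_prod_rpow_le _ _ (by simp [hm]) fun _ _ => by positivity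
    _ = ENNReal.ofReal (∏ k, ⟪S k g, g⟫_ℝ ^ (m⁻¹ : ℝ)) := by
        simp only [← hSk, ENNReal.ofReal_rpow_of_nonneg (hSg _) (inv_nonneg.2 m.cast_nonneg),
          ENNReal.ofReal_prod_of_nonneg fun k _ => Real.rpow_nonneg (hSg k) _]

/-- on `ℓ²`, `w(A₁∘⋯∘A_m) ≤ (w(A₁^{(m)}) w(A₂^{(m)}) ⋯ w(A_m^{(m)}))^{1/m}`. -/
theorem numRadius_hadamard_le_geom_mean
    (m : ℕ) (hm : 0 < m)
    (A : Fin m → ℕ → ℕ → ℝ) (hA : ∀ k i j, 0 ≤ A k i j)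
    (T : Fin m → lpSeq 2 →L[ℝ] lpSeq 2) (hT : ∀ k, Represents 2 (A k) (T k)) :
    ∃ (H : lpSeq 2 →L[ℝ] lpSeq 2) (S : Fin m → lpSeq 2 →L[ℝ] lpSeq 2),
      Represents 2 (hadProd A) H ∧
      (∀ k, Represents 2 (hadPow (A k) (m : ℝ)) (S k)) ∧
      numRadius H ≤ (∏ k, numRadius (S k)) ^ (1 / (m : ℝ)) := by
  obtain ⟨H, hH⟩ := exists_represents_hadProd hm hA hT
  choose S hS using fun k => (hT k).exists_hadPow (hA k) (Nat.one_le_cast.2 hm)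
  refine ⟨H, S, hH, hS, ?_⟩
  have hw : ∀ k, 0 ≤ numRadius (S k) := fun k => numRadius_nonneg _
  rw [one_div, ← Real.finsetProd_rpow _ _ fun k _ => hw k]
  refine Real.sSup_le ?_ (Finset.prod_nonneg fun k _ => Real.rpow_nonneg (hw k) _)
  rintro _ ⟨f, hf, rfl⟩
  have hSf : ∀ k, 0 ≤ ⟪S k (absLp f), absLp f⟫_ℝ := fun k =>
    (hS k).inner_nonneg (hadPow_nonneg (hA k) _) (absLp_nonneg f)
  calc |⟪H f, f⟫_ℝ| ≤ ⟪H (absLp f), absLp f⟫_ℝ := hH.abs_inner_le (hadProd_nonneg hA) f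
    _ ≤ ∏ k, ⟪S k (absLp f), absLp f⟫_ℝ ^ (m⁻¹ : ℝ) :=
      inner_hadProd_le hm.ne' hA hH hS (absLp_nonneg f)
    _ ≤ ∏ k, numRadius (S k) ^ (m⁻¹ : ℝ) :=
      Finset.prod_le_prod (fun k _ => Real.rpow_nonneg (hSf k) _) fun k _ =>
        Real.rpow_le_rpow (hSf k) ((le_abs_self _).trans
          (abs_inner_le_numRadius _ (by rw [norm_absLp, hf]))) (by positivity)
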